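/- arXiv:2407.14325 — 4 statements merged into one kernel-verified Lean document; each statement's English description precedes it below -/
import Mathlib

section
/- For every real number r > 0, the series ∑_{n=1}^∞ e^{-r/n} / (n(n+1)) is bounded below by e^{-1} / (r + 1). -/
lemma partial_sum_telescope (N : ℕ) (k : ℕ) :
    ∑ n ∈ Finset.range k, (1 : ℝ) / (((n : ℝ) + N + 1) * ((n : ℝ) + N + 2))
      = 1 / ((N : ℝ) + 1) - 1 / ((N : ℝ) + k + 1) := by
  induction k with
  | zero => simp
  | succ k ih =>
    rw [Finset.sum_range_succ, ih]
    have h1 : ((k : ℝ) + N + 1) ≠ 0 := by positivity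
    have h2 : ((k : ℝ) + N + 2) ≠ 0 := by positivity
    have h3 : ((N : ℝ) + 1) ≠ 0 := by positivity
    push_cast
    field_simp
    ring

lemma tail_hasSum (N : ℕ) :
    HasSum (fun n : ℕ => (1 : ℝ) / (((n : ℝ) + N + 1) * ((n : ℝ) + N + 2)))
      (1 / ((N : ℝ) + 1)) := by
  rw [hasSum_iff_tendsto_nat_of_nonneg (fun n => by positivity)]
  simp only [partial_sum_telescope]
  have : Filter.Tendsto (fun k : ℕ => 1 / ((N : ℝ) + k + 1)) Filter.atTop (nhds 0) := by
    simp only [one_div]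
    exact Filter.Tendsto.comp tendsto_inv_atTop_zero
      (Filter.tendsto_atTop_add_const_right _ _
        (Filter.tendsto_atTop_add_const_left _ _ tendsto_natCast_atTop_atTop))
  simpa using tendsto_const_nhds.sub this

lemma summable_a (r : ℝ) (hr : 0 ≤ r) :
    Summable (fun n : ℕ => Real.exp (-r / ((n : ℝ) + 1)) / (((n : ℝ) + 1) * ((n : ℝ) + 2))) := by
  have hs : Summable (fun n : ℕ => (1 : ℝ) / (((n : ℝ) + 1) * ((n : ℝ) + 2))) := by
    have := (tail_hasSum 0).summable
    simpa using this
  refine Summable.of_nonneg_of_le (fun n => by positivity) (fun n => ?_) hs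
  have h1 : Real.exp (-r / ((n : ℝ) + 1)) ≤ 1 := Real.exp_le_one_iff.mpr (by
    rw [neg_div, neg_nonpos]
    positivity)

  have h2 : (0 : ℝ) < ((n : ℝ) + 1) * ((n : ℝ) + 2) := by positivity
  rw [div_le_div_iff₀ h2 h2]
  nlinarith

/-- For every real `r > 0`, `∑_{n=1}^∞ e^{-r/n} / (n(n+1)) ≥ e^{-1}/(r+1)`. -/
theorem series_lower_bound (r : ℝ) (hr : 0 < r) :
    Real.exp (-1) / (r + 1) ≤
      ∑' n : ℕ, Real.exp (-r / ((n : ℝ) + 1)) / (((n : ℝ) + 1) * ((n : ℝ) + 2)) := by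
  set a : ℕ → ℝ := fun n => Real.exp (-r / ((n : ℝ) + 1)) / (((n : ℝ) + 1) * ((n : ℝ) + 2))
    with ha
  have hsum : Summable a := summable_a r hr.le
  set N := ⌊r⌋₊ with hN
  have hNr : (N : ℝ) ≤ r := Nat.floor_le hr.le
  have hrN : r < (N : ℝ) + 1 := Nat.lt_floor_add_one r
  have hshift : Summable (fun n : ℕ => a (n + N)) := (summable_nat_add_iff N).mpr hsum
  have hle : ∀ n : ℕ,
      Real.exp (-1) * ((1 : ℝ) / (((n : ℝ) + N + 1) * ((n : ℝ) + N + 2))) ≤ a (n + N) := by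
    intro n
    have hd : (0 : ℝ) < ((n : ℝ) + N + 1) * ((n : ℝ) + N + 2) := by positivity
    have heq : a (n + N) = Real.exp (-r / ((n : ℝ) + N + 1)) /
        (((n : ℝ) + N + 1) * ((n : ℝ) + N + 2)) := by
      simp only [ha]; push_cast; ring_nf
    rw [heq, mul_one_div]
    gcongr
    rw [neg_le, neg_div, neg_neg, div_le_one (by positivity)]
    have : (N : ℝ) + 1 ≤ (n : ℝ) + N + 1 := by
      have : (0 : ℝ) ≤ n := Nat.cast_nonneg n
      linarith
    linarith
  have h1 : Real.exp (-1) / (r + 1) ≤ Real.exp (-1) / ((N : ℝ) + 1) := by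
    apply div_le_div_of_nonneg_left (Real.exp_pos _).le (by positivity) (by linarith)
  have h2 : HasSum (fun n : ℕ =>
      Real.exp (-1) * ((1 : ℝ) / (((n : ℝ) + N + 1) * ((n : ℝ) + N + 2))))
      (Real.exp (-1) * (1 / ((N : ℝ) + 1))) := (tail_hasSum N).mul_left _
  have h3 : Real.exp (-1) * (1 / ((N : ℝ) + 1)) ≤ ∑' n : ℕ, a (n + N) :=
    h2.tsum_eq ▸ Summable.tsum_le_tsum hle h2.summable hshift
  have h4 : ∑' n : ℕ, a (n + N) ≤ ∑' n, a n := by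
    rw [← Summable.sum_add_tsum_nat_add N hsum]
    have : 0 ≤ ∑ i ∈ Finset.range N, a i :=
      Finset.sum_nonneg (fun i _ => by simp only [ha]; positivity)
    linarith
  calc Real.exp (-1) / (r + 1) ≤ Real.exp (-1) / ((N : ℝ) + 1) := h1
    _ = Real.exp (-1) * (1 / ((N : ℝ) + 1)) := by rw [mul_one_div]
    _ ≤ ∑' n : ℕ, a (n + N) := h3
    _ ≤ ∑' n, a n := h4
end

section
/- For every real number r > 0, the series ∑_{n=1}^∞ e^{-r/(n+1)} / (n(n+1)) is bounded above by 5/r. -/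
open Real Finset

lemma key_bound (r : ℝ) (hr : 0 < r) (n : ℕ) :
    Real.exp (-r / ((n : ℝ) + 2)) / (((n : ℝ) + 1) * ((n : ℝ) + 2)) ≤
      (Real.exp (-r / ((n : ℝ) + 2)) - Real.exp (-r / ((n : ℝ) + 1))) / r
        + 4 / (r * (((n : ℝ) + 1) * ((n : ℝ) + 2))) := by
  set a : ℝ := (n : ℝ) + 1 with ha
  set b : ℝ := (n : ℝ) + 2 with hb
  have ha0 : (1:ℝ) ≤ a := by rw [ha]; have := Nat.cast_nonneg (α:=ℝ) n; linarith
  have ha0' : (0:ℝ) < a := by linarith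
  have hb0 : (0:ℝ) < b := by positivity
  have hab : b ≤ 2 * a := by rw [ha, hb]; push_cast; linarith
  set x : ℝ := r / b with hx
  set u : ℝ := r / (a * b) with hu
  have hx0 : 0 < x := by positivity
  have hu0 : 0 < u := by positivity
  have hxb : -r / b = -x := by rw [hx]; ring
  have hxy : -r / a = -x + -u := by
    rw [hx, hu]; field_simp; ring
  have key1 : Real.exp (-u) ≤ 1 / (1 + u) := by
    rw [Real.exp_neg, one_div]
    exact inv_anti₀ (by positivity) (by linarith [Real.add_one_le_exp u])
  have key2 : u - 1 + Real.exp (-u) ≤ u ^ 2 := by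
    have h1 : 1 / (1 + u) ≤ 1 - u + u ^ 2 := by
      rw [div_le_iff₀ (by positivity)]; nlinarith
    linarith
  have key3 : Real.exp (-x) ≤ 2 / x ^ 2 := by
    have hx2 : x ^ 2 / 2 ≤ Real.exp x := by
      nlinarith [Real.quadratic_le_exp_of_nonneg hx0.le]
    rw [Real.exp_neg]
    calc (Real.exp x)⁻¹ ≤ (x ^ 2 / 2)⁻¹ := inv_anti₀ (by positivity) hx2
      _ = 2 / x ^ 2 := by rw [inv_div]
  have hux : r * u ≤ 2 * x ^ 2 := by
    have h1 : r * u = r ^ 2 / (a * b) := by rw [hu]; ring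
    have h2 : 2 * x ^ 2 = 2 * r ^ 2 / b ^ 2 := by rw [hx]; field_simp
    rw [h1, h2, div_le_div_iff₀ (by positivity) (by positivity)]
    nlinarith [mul_le_mul_of_nonneg_right hab hb0.le, sq_nonneg r]
  have main : Real.exp (-x) * (u - 1 + Real.exp (-u)) ≤ 4 * u / r := by
    have hEnn : 0 ≤ u - 1 + Real.exp (-u) := by
      nlinarith [Real.add_one_le_exp (-u)]
    calc Real.exp (-x) * (u - 1 + Real.exp (-u)) ≤ (2 / x ^ 2) * u ^ 2 :=
          mul_le_mul key3 key2 hEnn (by positivity)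
      _ ≤ 4 * u / r := by
          rw [div_mul_eq_mul_div, div_le_div_iff₀ (by positivity) hr]
          nlinarith
  have goal2 : Real.exp (-x) * u ≤ Real.exp (-x) - Real.exp (-x) * Real.exp (-u) + 4 * u / r := by
    nlinarith [main]
  rw [hxb, hxy, Real.exp_add]
  have habne : a * b ≠ 0 := by positivity
  calc Real.exp (-x) / (a * b) = (Real.exp (-x) * u) / r := by
        rw [hu]; field_simp
    _ ≤ (Real.exp (-x) - Real.exp (-x) * Real.exp (-u) + 4 * u / r) / r := by gcongr
    _ = (Real.exp (-x) - Real.exp (-x) * Real.exp (-u)) / r + 4 / (r * (a * b)) := by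
        rw [hu]; field_simp

lemma f_nonneg (r : ℝ) (n : ℕ) :
    0 ≤ Real.exp (-r / ((n : ℝ) + 2)) / (((n : ℝ) + 1) * ((n : ℝ) + 2)) := by positivity

lemma f_summable (r : ℝ) (hr : 0 < r) :
    Summable (fun n : ℕ => Real.exp (-r / ((n : ℝ) + 2)) / (((n : ℝ) + 1) * ((n : ℝ) + 2))) := by
  have hsq : Summable (fun n : ℕ => 1 / ((n : ℝ) + 1) ^ 2) := by
    have h := Real.summable_one_div_nat_pow.mpr (by norm_num : 1 < 2)
    have h2 := (summable_nat_add_iff (f := fun n : ℕ => 1 / (n : ℝ) ^ 2) 1).mpr h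
    apply h2.congr
    intro n
    push_cast
    ring
  apply Summable.of_nonneg_of_le (fun n => by positivity) (fun n => ?_) hsq
  have hE : Real.exp (-r / ((n : ℝ) + 2)) ≤ 1 := by
    rw [Real.exp_le_one_iff]
    have h0 : (0:ℝ) < (n : ℝ) + 2 := by positivity
    rw [div_nonpos_iff]; right; constructor <;> linarith
  calc Real.exp (-r / ((n : ℝ) + 2)) / (((n : ℝ) + 1) * ((n : ℝ) + 2))
      ≤ 1 / (((n : ℝ) + 1) * ((n : ℝ) + 2)) := by gcongr <;> positivity
    _ ≤ 1 / ((n : ℝ) + 1) ^ 2 := by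
        gcongr
        <;> nlinarith [Nat.cast_nonneg (α := ℝ) n]

/-- For every real `r > 0`, `∑_{n=1}^∞ e^{-r/(n+1)} / (n(n+1)) ≤ 5/r`. -/
theorem series_upper_bound (r : ℝ) (hr : 0 < r) :
    ∑' n : ℕ, Real.exp (-r / ((n : ℝ) + 2)) / (((n : ℝ) + 1) * ((n : ℝ) + 2)) ≤ 5 / r := by
  apply Summable.tsum_le_of_sum_le (f_summable r hr)
  intro s
  obtain ⟨N, hN⟩ := s.exists_nat_subset_range
  calc ∑ n ∈ s, Real.exp (-r / ((n : ℝ) + 2)) / (((n : ℝ) + 1) * ((n : ℝ) + 2))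
      ≤ ∑ n ∈ Finset.range N, Real.exp (-r / ((n : ℝ) + 2)) / (((n : ℝ) + 1) * ((n : ℝ) + 2)) :=
        Finset.sum_le_sum_of_subset_of_nonneg hN (fun i _ _ => f_nonneg r i)
    _ ≤ ∑ n ∈ Finset.range N, ((Real.exp (-r / ((n : ℝ) + 2)) - Real.exp (-r / ((n : ℝ) + 1))) / r
          + 4 / (r * (((n : ℝ) + 1) * ((n : ℝ) + 2)))) :=
        Finset.sum_le_sum (fun n _ => key_bound r hr n)
    _ ≤ 5 / r := by
        rw [Finset.sum_add_distrib]
        have h1 : ∑ n ∈ Finset.range N, (Real.exp (-r / ((n : ℝ) + 2)) - Real.exp (-r / ((n : ℝ) + 1))) / r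
            = (Real.exp (-r / ((N : ℝ) + 1)) - Real.exp (-r)) / r := by
          rw [← Finset.sum_div]
          congr 1
          calc ∑ n ∈ Finset.range N, (Real.exp (-r / ((n : ℝ) + 2)) - Real.exp (-r / ((n : ℝ) + 1)))
              = ∑ n ∈ Finset.range N, ((fun k : ℕ => Real.exp (-r / ((k : ℝ) + 1))) (n + 1)
                  - (fun k : ℕ => Real.exp (-r / ((k : ℝ) + 1))) n) := by
                apply Finset.sum_congr rfl; intro n _; simp only []; push_cast; ring_nf
            _ = Real.exp (-r / ((N : ℝ) + 1)) - Real.exp (-r / ((0 : ℕ) + 1 : ℝ)) := by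
                rw [Finset.sum_range_sub (f := fun k : ℕ => Real.exp (-r / ((k : ℝ) + 1)))]
            _ = Real.exp (-r / ((N : ℝ) + 1)) - Real.exp (-r) := by norm_num
        have h2 : ∑ n ∈ Finset.range N, 4 / (r * (((n : ℝ) + 1) * ((n : ℝ) + 2)))
            = (4 / r) * (1 - 1 / ((N : ℝ) + 1)) := by
          have : ∀ n : ℕ, 4 / (r * (((n : ℝ) + 1) * ((n : ℝ) + 2)))
              = (4 / r) * (1 / ((n : ℝ) + 1) - 1 / ((n : ℝ) + 2)) := by
            intro n
            have h1 : ((n : ℝ) + 1) ≠ 0 := by positivity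
            have h2 : ((n : ℝ) + 2) ≠ 0 := by positivity
            field_simp
            ring
          rw [Finset.sum_congr rfl (fun n _ => this n), ← Finset.mul_sum]
          congr 1
          calc ∑ n ∈ Finset.range N, (1 / ((n : ℝ) + 1) - 1 / ((n : ℝ) + 2))
              = ∑ n ∈ Finset.range N, ((fun k : ℕ => -(1 / ((k : ℝ) + 1))) (n + 1)
                  - (fun k : ℕ => -(1 / ((k : ℝ) + 1))) n) := by
                apply Finset.sum_congr rfl; intro n _; simp only []; push_cast; ring
            _ = -(1 / ((N : ℝ) + 1)) - -(1 / (((0 : ℕ) : ℝ) + 1)) := by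
                rw [Finset.sum_range_sub (f := fun k : ℕ => -(1 / ((k : ℝ) + 1)))]
            _ = 1 - 1 / ((N : ℝ) + 1) := by push_cast; ring
        rw [h1, h2]
        have hE1 : Real.exp (-r / ((N : ℝ) + 1)) ≤ 1 := by
          rw [Real.exp_le_one_iff]
          have : (0:ℝ) < (N : ℝ) + 1 := by positivity
          rw [div_nonpos_iff]; right; constructor <;> linarith
        have hE2 : 0 < Real.exp (-r) := Real.exp_pos _
        have hN1 : 0 < 1 / ((N : ℝ) + 1) := by positivity
        have h4r : 0 < 4 / r := by positivity
        calc (Real.exp (-r / ((N : ℝ) + 1)) - Real.exp (-r)) / r + (4 / r) * (1 - 1 / ((N : ℝ) + 1))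
            ≤ 1 / r + (4 / r) * 1 := by
              gcongr
              · linarith
              · linarith
          _ = 5 / r := by field_simp; ring
end

section
/- Let α ∈ (0,2) and let n, k be integers. Then there is a constant C₁ > 0, depending only on α, such that ∑_{p ∈ ℤ, p ≠ k, p ≠ n} 1/(|n-p|^{1+α} |p-k|^{1+α}) ≤ C₁ / (|n-k|+1)^{1+α}. -/
open Real

private lemma core_ineq (s D a b : ℝ) (hs : 0 < s) (ha : 1 ≤ a) (hb : 1 ≤ b)
    (hD0 : 0 < D) (hD : D ≤ a + b + 1) :
    1 / (a ^ s * b ^ s) ≤ (4 / D) ^ s * (1 / a ^ s + 1 / b ^ s) := by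
  have ha0 : (0:ℝ) < a := lt_of_lt_of_le one_pos ha
  have hb0 : (0:ℝ) < b := lt_of_lt_of_le one_pos hb
  have has : (0:ℝ) < a ^ s := Real.rpow_pos_of_pos ha0 s
  have hbs : (0:ℝ) < b ^ s := Real.rpow_pos_of_pos hb0 s
  rcases le_total a b with hab | hab
  · have hq : (1:ℝ) ≤ (4 / D) ^ s * b ^ s := by
      rw [← Real.mul_rpow (by positivity) hb0.le]
      calc (1:ℝ) = 1 ^ s := (Real.one_rpow s).symm
        _ ≤ (4 / D * b) ^ s := by
            apply Real.rpow_le_rpow zero_le_one _ hs.le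
            rw [div_mul_eq_mul_div, le_div_iff₀ hD0]
            nlinarith
    have h2 : 1 / b ^ s ≤ (4 / D) ^ s := by
      rw [div_le_iff₀ hbs]; linarith
    calc 1 / (a ^ s * b ^ s) = (1 / b ^ s) * (1 / a ^ s) := by ring
      _ ≤ (4 / D) ^ s * (1 / a ^ s) :=
          mul_le_mul_of_nonneg_right h2 (by positivity)
      _ ≤ (4 / D) ^ s * (1 / a ^ s + 1 / b ^ s) := by
          apply mul_le_mul_of_nonneg_left _ (by positivity)
          nlinarith [one_div_pos.2 hbs]
  · have hq : (1:ℝ) ≤ (4 / D) ^ s * a ^ s := by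
      rw [← Real.mul_rpow (by positivity) ha0.le]
      calc (1:ℝ) = 1 ^ s := (Real.one_rpow s).symm
        _ ≤ (4 / D * a) ^ s := by
            apply Real.rpow_le_rpow zero_le_one _ hs.le
            rw [div_mul_eq_mul_div, le_div_iff₀ hD0]
            nlinarith
    have h2 : 1 / a ^ s ≤ (4 / D) ^ s := by
      rw [div_le_iff₀ has]; linarith
    calc 1 / (a ^ s * b ^ s) = (1 / a ^ s) * (1 / b ^ s) := by ring
      _ ≤ (4 / D) ^ s * (1 / b ^ s) :=
          mul_le_mul_of_nonneg_right h2 (by positivity)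
      _ ≤ (4 / D) ^ s * (1 / a ^ s + 1 / b ^ s) := by
          apply mul_le_mul_of_nonneg_left _ (by positivity)
          nlinarith [one_div_pos.2 has]

/-- For `α ∈ (0,2)` there is `C₁ > 0` (depending only on `α`) such that for all integers
`n, k`: `∑_{p ≠ k, p ≠ n} 1/(|n-p|^{1+α} |p-k|^{1+α}) ≤ C₁/(|n-k|+1)^{1+α}`. -/
theorem auxiliary_series_i (α : ℝ) (hα0 : 0 < α) (hα2 : α < 2) :
    ∃ C₁ > (0 : ℝ), ∀ n k : ℤ,
      ∑' p : {p : ℤ // p ≠ k ∧ p ≠ n},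
          1 / (|((n - p.1 : ℤ) : ℝ)| ^ (1 + α) * |((p.1 - k : ℤ) : ℝ)| ^ (1 + α)) ≤
        C₁ / ((|((n - k : ℤ) : ℝ)| + 1) ^ (1 + α)) := by
  set s := 1 + α with hs_def
  have hs1 : 1 < s := by rw [hs_def]; linarith
  have hs0 : 0 < s := by linarith
  have hf : Summable (fun m : ℤ => 1 / |(m:ℝ)| ^ s) := by
    simpa using (Real.summable_one_div_int_add_rpow 0 s).2 hs1
  set Z := ∑' m : ℤ, 1 / |(m:ℝ)| ^ s with hZ
  have hZ1 : (1:ℝ) ≤ Z := by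
    have h1 : 1 / |((1:ℤ):ℝ)| ^ s ≤ Z := Summable.le_tsum hf 1 (fun m _ => by positivity)
    simpa using h1
  refine ⟨(4:ℝ) ^ s * (2 * Z), mul_pos (Real.rpow_pos_of_pos (by norm_num) s) (by linarith), fun n k => ?_⟩
  set D := |((n - k : ℤ):ℝ)| + 1 with hD_def
  have hD1 : (1:ℝ) ≤ D := by
    have := abs_nonneg ((n - k : ℤ):ℝ); rw [hD_def]; linarith
  have hD0 : (0:ℝ) < D := lt_of_lt_of_le one_pos hD1
  set g : ℤ → ℝ := fun p => 1 / (|((n - p : ℤ):ℝ)| ^ s * |((p - k : ℤ):ℝ)| ^ s) with hg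
  set h : ℤ → ℝ :=
    fun p => (4 / D) ^ s * (1 / |((n - p : ℤ):ℝ)| ^ s + 1 / |((p - k : ℤ):ℝ)| ^ s) with hh
  -- pointwise bound
  have key : ∀ p : ℤ, g p ≤ h p := by
    intro p
    by_cases hpk : p = k
    · have h0 : |((p - k : ℤ):ℝ)| = 0 := by simp [hpk]
      have : g p = 0 := by
        simp only [hg, h0, Real.zero_rpow hs0.ne', mul_zero, div_zero]
      rw [this, hh]; positivity
    by_cases hpn : p = n
    · have h0 : |((n - p : ℤ):ℝ)| = 0 := by simp [hpn]
      have : g p = 0 := by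
        simp only [hg, h0, Real.zero_rpow hs0.ne', zero_mul, div_zero]
      rw [this, hh]; positivity
    have ha1 : (1:ℝ) ≤ |((n - p : ℤ):ℝ)| := by
      have h1 : (1:ℤ) ≤ |n - p| := Int.one_le_abs (sub_ne_zero.2 fun e => hpn e.symm)
      exact_mod_cast h1
    have hb1 : (1:ℝ) ≤ |((p - k : ℤ):ℝ)| := by
      have h1 : (1:ℤ) ≤ |p - k| := Int.one_le_abs (sub_ne_zero.2 hpk)
      exact_mod_cast h1
    have htri : |((n - k : ℤ):ℝ)| ≤ |((n - p : ℤ):ℝ)| + |((p - k : ℤ):ℝ)| := by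
      have e : ((n - k : ℤ):ℝ) = ((n - p : ℤ):ℝ) + ((p - k : ℤ):ℝ) := by push_cast; ring
      rw [e]; exact abs_add_le _ _
    exact core_ineq s D _ _ hs0 ha1 hb1 hD0 (by rw [hD_def]; linarith)
  -- summability
  have hfa : Summable (fun p : ℤ => 1 / |((n - p : ℤ):ℝ)| ^ s) :=
    hf.comp_injective (Equiv.subLeft n).injective
  have hfb : Summable (fun p : ℤ => 1 / |((p - k : ℤ):ℝ)| ^ s) :=
    hf.comp_injective (Equiv.subRight k).injective
  have hsum_h : Summable h := by
    rw [hh]; exact (hfa.add hfb).mul_left _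
  have hsum_g : Summable g :=
    Summable.of_nonneg_of_le (fun p => by rw [hg]; positivity) key hsum_h
  have hsub : (∑' p : {p : ℤ // p ≠ k ∧ p ≠ n},
      1 / (|((n - p.1 : ℤ) : ℝ)| ^ s * |((p.1 - k : ℤ) : ℝ)| ^ s)) = ∑' p : ℤ, g p := by
    refine tsum_subtype_eq_of_support_subset (f := g) (s := {p : ℤ | p ≠ k ∧ p ≠ n}) ?_
    intro p hp
    simp only [Function.mem_support, hg] at hp
    refine ⟨fun e => hp ?_, fun e => hp ?_⟩
    · simp [e, Real.zero_rpow hs0.ne']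
    · simp [e, Real.zero_rpow hs0.ne']
  have e1 : ∑' p : ℤ, 1 / |((n - p : ℤ):ℝ)| ^ s = Z :=
    (Equiv.subLeft n).tsum_eq (fun m : ℤ => 1 / |(m:ℝ)| ^ s)
  have e2 : ∑' p : ℤ, 1 / |((p - k : ℤ):ℝ)| ^ s = Z :=
    (Equiv.subRight k).tsum_eq (fun m : ℤ => 1 / |(m:ℝ)| ^ s)
  calc ∑' p : {p : ℤ // p ≠ k ∧ p ≠ n},
        1 / (|((n - p.1 : ℤ) : ℝ)| ^ s * |((p.1 - k : ℤ) : ℝ)| ^ s)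
      = ∑' p : ℤ, g p := hsub
    _ ≤ ∑' p : ℤ, h p := Summable.tsum_le_tsum key hsum_g hsum_h
    _ = (4 / D) ^ s * (Z + Z) := by
        rw [hh, tsum_mul_left, Summable.tsum_add hfa hfb, e1, e2]
    _ = (4:ℝ) ^ s * (2 * Z) / D ^ s := by
        rw [Real.div_rpow (by norm_num) hD0.le]; ring
end

section
/- Let α ∈ (0,2) and let n, k be integers. Then there is a constant C₂ > 0, depending only on α, such that ∑_{p ∈ ℤ, p ≠ k} 1/((|n-p|+1)^{1+α} |p-k|^{1+α}) ≤ C₂ / (|n-k|+1)^{1+α}. -/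
private lemma key_ptwise {s M a b : ℝ} (hs : 0 < s) (hM : 0 < M) (ha : 0 < a) (hb : 0 < b)
    (hab : M ≤ a + b) :
    1 / (a ^ s * b ^ s) ≤ 2 ^ s / M ^ s * (1 / a ^ s + 1 / b ^ s) := by
  have has : (0:ℝ) < a ^ s := Real.rpow_pos_of_pos ha s
  have hbs : (0:ℝ) < b ^ s := Real.rpow_pos_of_pos hb s
  have hMs : (0:ℝ) < M ^ s := Real.rpow_pos_of_pos hM s
  have h2s : (0:ℝ) < (2:ℝ) ^ s := Real.rpow_pos_of_pos two_pos s
  rcases le_total a b with h | h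
  · have hb2 : M / 2 ≤ b := by linarith
    have h1 : (M / 2) ^ s ≤ b ^ s :=
      Real.rpow_le_rpow (by positivity) hb2 hs.le
    rw [Real.div_rpow hM.le (by norm_num)] at h1
    have hy : 1 / b ^ s ≤ 2 ^ s / M ^ s := by
      rw [div_le_div_iff₀ hbs hMs, one_mul]
      rw [div_le_iff₀ (by positivity)] at h1
      nlinarith
    have hx : (0:ℝ) ≤ 1 / a ^ s := by positivity
    have h2 := mul_le_mul_of_nonneg_left hy hx
    have hrw : 1 / (a ^ s * b ^ s) = (1 / a ^ s) * (1 / b ^ s) := by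
      field_simp
    have hCy : (0:ℝ) ≤ 2 ^ s / M ^ s * (1 / b ^ s) := by positivity
    rw [hrw]; nlinarith [h2, hCy]
  · have ha2 : M / 2 ≤ a := by linarith
    have h1 : (M / 2) ^ s ≤ a ^ s :=
      Real.rpow_le_rpow (by positivity) ha2 hs.le
    rw [Real.div_rpow hM.le (by norm_num)] at h1
    have hy : 1 / a ^ s ≤ 2 ^ s / M ^ s := by
      rw [div_le_div_iff₀ has hMs, one_mul]
      rw [div_le_iff₀ (by positivity)] at h1
      nlinarith
    have hx : (0:ℝ) ≤ 1 / b ^ s := by positivity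
    have h2 := mul_le_mul_of_nonneg_left hy hx
    have hrw : 1 / (a ^ s * b ^ s) = (1 / b ^ s) * (1 / a ^ s) := by
      field_simp
    have hCy : (0:ℝ) ≤ 2 ^ s / M ^ s * (1 / a ^ s) := by positivity
    rw [hrw]; nlinarith [h2, hCy]

private lemma sumS {s : ℝ} (hs1 : 1 < s) :
    Summable fun j : ℤ => 1 / (|(j : ℝ)| + 1) ^ s := by
  have hnat : Summable fun n : ℕ => 1 / ((n : ℝ) + 1) ^ s := by
    have := (summable_nat_add_iff 1).mpr (Real.summable_one_div_nat_rpow.mpr hs1)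
    exact this.congr fun n => by push_cast; ring_nf
  apply Summable.of_nat_of_neg
  · exact hnat.congr fun n => by push_cast [abs_of_nonneg (n.cast_nonneg : (0:ℝ) ≤ n)]; ring_nf
  · exact hnat.congr fun n => by
      push_cast [abs_neg, abs_of_nonneg (n.cast_nonneg : (0:ℝ) ≤ n)]; ring_nf

private lemma sumT {s : ℝ} (hs1 : 1 < s) :
    Summable fun q : ℤ => 1 / |(q : ℝ)| ^ s := by
  have := Real.summable_abs_int_rpow hs1
  exact this.congr fun q => by
    rw [Real.rpow_neg (abs_nonneg _), one_div]

set_option maxHeartbeats 1000000 in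
/-- For `α ∈ (0,2)` there is `C₂ > 0` (depending only on `α`) such that for all integers
`n, k`: `∑_{p ≠ k} 1/((|n-p|+1)^{1+α} |p-k|^{1+α}) ≤ C₂/(|n-k|+1)^{1+α}`. -/
theorem auxiliary_series_ii (α : ℝ) (hα0 : 0 < α) (hα2 : α < 2) :
    ∃ C₂ > (0 : ℝ), ∀ n k : ℤ,
      ∑' p : {p : ℤ // p ≠ k},
          1 / ((|((n - p.1 : ℤ) : ℝ)| + 1) ^ (1 + α) * |((p.1 - k : ℤ) : ℝ)| ^ (1 + α)) ≤
        C₂ / ((|((n - k : ℤ) : ℝ)| + 1) ^ (1 + α)) := by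
  set s : ℝ := 1 + α with hs_def
  have hs0 : 0 < s := by simp only [hs_def]; linarith
  have hs1 : 1 < s := by simp only [hs_def]; linarith
  set S : ℝ := ∑' j : ℤ, 1 / (|(j : ℝ)| + 1) ^ s with hS_def
  set T : ℝ := ∑' q : ℤ, 1 / |(q : ℝ)| ^ s with hT_def
  have hS0 : 0 ≤ S := tsum_nonneg fun j => by positivity
  have hT0 : 0 ≤ T := tsum_nonneg fun q => by positivity
  have h2s : (0:ℝ) < 2 ^ s := Real.rpow_pos_of_pos two_pos s
  refine ⟨2 ^ s * (S + T) + 1, by nlinarith, fun n k => ?_⟩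
  set M : ℝ := |((n - k : ℤ) : ℝ)| + 1 with hM_def
  have hM : 0 < M := by positivity
  set g1 : ℤ → ℝ := fun p => 1 / (|((n - p : ℤ) : ℝ)| + 1) ^ s with hg1_def
  set g2 : ℤ → ℝ := fun p => 1 / |((p - k : ℤ) : ℝ)| ^ s with hg2_def
  have hg1 : Summable g1 := (Equiv.subLeft n).summable_iff.mpr (sumS hs1)
  have hg2 : Summable g2 := (Equiv.subRight k).summable_iff.mpr (sumT hs1)
  have htg1 : ∑' p : ℤ, g1 p = S := (Equiv.subLeft n).tsum_eq fun j : ℤ => 1 / (|(j : ℝ)| + 1) ^ s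
  have htg2 : ∑' p : ℤ, g2 p = T := (Equiv.subRight k).tsum_eq fun q : ℤ => 1 / |(q : ℝ)| ^ s
  have hg1s : Summable fun p : {p : ℤ // p ≠ k} => g1 p.1 := hg1.subtype {p : ℤ | p ≠ k}
  have hg2s : Summable fun p : {p : ℤ // p ≠ k} => g2 p.1 := hg2.subtype {p : ℤ | p ≠ k}
  have hpt : ∀ p : {p : ℤ // p ≠ k},
      1 / ((|((n - p.1 : ℤ) : ℝ)| + 1) ^ s * |((p.1 - k : ℤ) : ℝ)| ^ s) ≤
        2 ^ s / M ^ s * (g1 p.1 + g2 p.1) := by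
    intro p
    have hb : 0 < |((p.1 - k : ℤ) : ℝ)| := by
      rw [abs_pos]
      exact_mod_cast sub_ne_zero.mpr p.2
    have ha : (0:ℝ) < |((n - p.1 : ℤ) : ℝ)| + 1 := by positivity
    have hab : M ≤ (|((n - p.1 : ℤ) : ℝ)| + 1) + |((p.1 - k : ℤ) : ℝ)| := by
      have : ((n - k : ℤ) : ℝ) = ((n - p.1 : ℤ) : ℝ) + ((p.1 - k : ℤ) : ℝ) := by
        push_cast; ring
      have h3 := abs_add_le ((n - p.1 : ℤ) : ℝ) ((p.1 - k : ℤ) : ℝ)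
      rw [← this] at h3
      simp only [hM_def]; linarith
    exact key_ptwise hs0 hM ha hb hab
  have hterm : Summable fun p : {p : ℤ // p ≠ k} =>
      1 / ((|((n - p.1 : ℤ) : ℝ)| + 1) ^ s * |((p.1 - k : ℤ) : ℝ)| ^ s) :=
    Summable.of_nonneg_of_le (fun p => by positivity) hpt ((hg1s.add hg2s).mul_left _)
  have hsub1 : (∑' p : {p : ℤ // p ≠ k}, g1 p.1) ≤ S := by
    rw [← htg1]
    exact hg1s.tsum_le_tsum_of_inj Subtype.val Subtype.val_injective
      (fun c _ => by positivity) (fun p => le_rfl) hg1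
  have hsub2 : (∑' p : {p : ℤ // p ≠ k}, g2 p.1) ≤ T := by
    rw [← htg2]
    exact hg2s.tsum_le_tsum_of_inj Subtype.val Subtype.val_injective
      (fun c _ => by positivity) (fun p => le_rfl) hg2
  calc ∑' p : {p : ℤ // p ≠ k},
        1 / ((|((n - p.1 : ℤ) : ℝ)| + 1) ^ s * |((p.1 - k : ℤ) : ℝ)| ^ s)
      ≤ ∑' p : {p : ℤ // p ≠ k}, 2 ^ s / M ^ s * (g1 p.1 + g2 p.1) :=
        hterm.tsum_le_tsum hpt ((hg1s.add hg2s).mul_left _)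
    _ = 2 ^ s / M ^ s * ((∑' p : {p : ℤ // p ≠ k}, g1 p.1) + ∑' p : {p : ℤ // p ≠ k}, g2 p.1) := by
        rw [tsum_mul_left, hg1s.tsum_add hg2s]
    _ ≤ 2 ^ s / M ^ s * (S + T) := by
        have := add_le_add hsub1 hsub2
        have hC : (0:ℝ) ≤ 2 ^ s / M ^ s := by positivity
        exact mul_le_mul_of_nonneg_left this hC
    _ = 2 ^ s * (S + T) / M ^ s := by ring
    _ ≤ (2 ^ s * (S + T) + 1) / M ^ s := by
        have hMs : (0:ℝ) < M ^ s := Real.rpow_pos_of_pos hM s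
        gcongr
        linarith
end
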